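/- Let 𝒜 = ℂ[E₁,E₂,A₀,A₁] with the derivation f as above, δ = 4E₂ − E₁² and v = A₀ − (1/2)E₁A₁. Fix natural numbers j, m, n and set γ = 2j + (n−m)/2 ∈ ℂ. Then for every integer r ≥ 1, f^r(δʲ A₁^m v^n) = ∑_{k+2a=r, k,a ≥ 0} (−1)^a · ((k+2a)(k+2a−1)⋯(k+1)/a!) · (γ)(γ+1)⋯(γ+r−a−1) · E₁^k E₂^a · δʲ A₁^m v^n, where the factor (k+2a)⋯(k+1) equals 1 when a = 0 and the factor (γ)⋯(γ+r−a−1) is the product ∏_{i=0}^{r−a−1}(γ+i). -/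

import Mathlib

/-!
If a derivation `D` satisfies `D x = x² - 2y`, `D y = xy` and `D P = γ x P`, then
`D (xᵏ yᵃ P) = (γ + k + a) xᵏ⁺¹ yᵃ P - 2k xᵏ⁻¹ yᵃ⁺¹ P`. Hence `Dʳ P` is a combination of the
monomials `xʳ⁻²ᵃ yᵃ P`, whose coefficients obey a two-term recurrence in `r`; the closed form
`(-1)ᵃ r(r-1)⋯(r-2a+1) / a! · γ(γ+1)⋯(γ+r-a-1)` solves it thanks to the Pascal rule for
falling factorials. In `𝒜`, the element `P = δʲ A₁ᵐ vⁿ` qualifies because `δ`, `A₁` and `v`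
have logarithmic derivatives `2E₁`, `-E₁/2` and `E₁/2`.
-/

open Finset

theorem Nat.succ_descFactorial_succ_eq_add (n k : ℕ) :
    (n + 1).descFactorial (k + 1) = n.descFactorial (k + 1) + (k + 1) * n.descFactorial k := by
  simp only [Nat.descFactorial_eq_factorial_mul_choose, Nat.choose_succ_succ, Nat.factorial_succ]
  ring

theorem sum_filter_add_two_mul_eq {M : Type*} [AddCommMonoid M] (r : ℕ) (F : ℕ × ℕ → M) :
    ∑ p ∈ (range (r + 1) ×ˢ range (r + 1)).filter (fun p => p.1 + 2 * p.2 = r), F p =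
      ∑ a ∈ (range (r + 1)).filter (fun a => 2 * a ≤ r), F (r - 2 * a, a) := by
  refine sum_nbij' (fun p => p.2) (fun a => (r - 2 * a, a)) ?_ ?_ ?_ (fun _ _ => rfl) ?h
  case h =>
    rintro ⟨k, a⟩ hka
    rw [← (mem_filter.mp hka).2, Nat.add_sub_cancel]
  all_goals
    simp only [mem_filter, mem_product, mem_range, Prod.forall, Prod.mk.injEq, and_true]
    intros
    omega

section IterCoeff

variable {K : Type*} [Field K]

-- `r.descFactorial (2 * a)` vanishes for `r < 2 * a`, which makes the truncated `r - a` harmless.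
noncomputable def iterCoeff (γ : K) (r a : ℕ) : K :=
  (-1) ^ a * ((r.descFactorial (2 * a) : K) / a.factorial) * ∏ i ∈ range (r - a), (γ + i)

variable (γ : K)

theorem iterCoeff_of_lt {r a : ℕ} (h : r < 2 * a) : iterCoeff γ r a = 0 := by
  simp [iterCoeff, Nat.descFactorial_eq_zero_iff_lt.mpr h]

theorem iterCoeff_zero_zero : iterCoeff γ 0 0 = 1 := by
  simp [iterCoeff]

theorem iterCoeff_succ_zero (r : ℕ) : iterCoeff γ (r + 1) 0 = iterCoeff γ r 0 * (γ + r) := by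
  simp [iterCoeff, prod_range_succ]

theorem iterCoeff_succ_succ [CharZero K] (r a : ℕ) :
    iterCoeff γ (r + 1) (a + 1) =
      iterCoeff γ r (a + 1) * (γ + (r - (a + 1) : ℕ)) - 2 * (r - 2 * a : ℕ) * iterCoeff γ r a := by
  rcases le_or_gt r a with hra | hra
  · rw [iterCoeff_of_lt γ (by omega), iterCoeff_of_lt γ (by omega),
      Nat.sub_eq_zero_of_le (show r ≤ 2 * a by omega)]
    simp
  obtain ⟨t, rfl⟩ : ∃ t, r = a + 1 + t := ⟨r - (a + 1), by omega⟩
  have hdesc : (a + 1 + t + 1).descFactorial (2 * (a + 1)) =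
      (a + 1 + t).descFactorial (2 * (a + 1)) +
        (2 * a + 2) * ((a + 1 + t - 2 * a) * (a + 1 + t).descFactorial (2 * a)) := by
    rw [show 2 * (a + 1) = 2 * a + 1 + 1 by ring, Nat.succ_descFactorial_succ_eq_add,
      Nat.descFactorial_succ _ (2 * a)]
  simp only [iterCoeff, hdesc, show a + 1 + t + 1 - (a + 1) = t + 1 by omega,
    show a + 1 + t - (a + 1) = t by omega, show a + 1 + t - a = t + 1 by omega, prod_range_succ,
    Nat.factorial_succ, pow_succ]
  push_cast
  field_simp
  ring

theorem iterCoeff_eq_prod {r a : ℕ} (h : 2 * a ≤ r) :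
    iterCoeff γ r a = (-1) ^ a * ((∏ i ∈ range (2 * a), (((r - 2 * a : ℕ) : K) + 2 * a - i)) /
      a.factorial) * ∏ i ∈ range (r - a), (γ + i) := by
  rw [iterCoeff, Nat.descFactorial_eq_prod_range, Nat.cast_prod]
  congr 3
  refine prod_congr rfl fun i hi => ?_
  rw [mem_range] at hi
  rw [Nat.cast_sub (by omega), Nat.cast_sub h]
  push_cast
  ring

end IterCoeff

namespace Derivation

section CommRing

variable {R A : Type*} [CommRing R] [CommRing A] [Algebra R A] (D : Derivation R A A)

theorem map_mul_of_map_eq_mul {a b u w : A} (ha : D a = u * a) (hb : D b = w * b) :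
    D (a * b) = (u + w) * (a * b) := by
  rw [leibniz, ha, hb, smul_eq_mul, smul_eq_mul]
  ring

theorem map_pow_of_map_eq_mul {a u : A} (ha : D a = u * a) (n : ℕ) :
    D (a ^ n) = (n • u) * a ^ n := by
  induction n with
  | zero => simp
  | succ n ih => rw [pow_succ, map_mul_of_map_eq_mul D ih ha, succ_nsmul]

variable {x y P : A} {γ : R} (hx : D x = x ^ 2 - 2 * y) (hy : D y = x * y)
  (hP : D P = (γ • x) * P)
include hx hy hP

theorem map_pow_mul_pow_mul (k a : ℕ) :
    D (x ^ k * y ^ a * P) =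
      (γ + k + a) • (x ^ (k + 1) * y ^ a * P) - (2 * k : R) • (x ^ (k - 1) * y ^ (a + 1) * P) := by
  rw [leibniz, leibniz, leibniz_pow, leibniz_pow, hx, hy, hP]
  simp only [smul_eq_mul, nsmul_eq_mul]
  rcases k with _ | k <;> rcases a with _ | a <;>
  · simp only [Algebra.smul_def, map_add, map_mul, map_ofNat]
    push_cast
    ring

end CommRing

variable {K A : Type*} [Field K] [CommRing A] [Algebra K A] (D : Derivation K A A)
  {x y P : A} {γ : K} (hx : D x = x ^ 2 - 2 * y) (hy : D y = x * y) (hP : D P = (γ • x) * P)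
include hx hy hP

theorem iterCoeff_smul_map_pow_mul_pow_mul (r a : ℕ) :
    iterCoeff γ r a • D (x ^ (r - 2 * a) * y ^ a * P) =
      (iterCoeff γ r a * (γ + (r - a : ℕ))) • (x ^ (r + 1 - 2 * a) * y ^ a * P) -
        (2 * (r - 2 * a : ℕ) * iterCoeff γ r a) •
          (x ^ (r + 1 - 2 * (a + 1)) * y ^ (a + 1) * P) := by
  rcases lt_or_ge r (2 * a) with h | h
  · simp [iterCoeff_of_lt γ h]
  rw [D.map_pow_mul_pow_mul hx hy hP, smul_sub, smul_smul, smul_smul,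
    show r - 2 * a + 1 = r + 1 - 2 * a by omega, show r - 2 * a - 1 = r + 1 - 2 * (a + 1) by omega,
    add_assoc, ← Nat.cast_add, show r - 2 * a + a = r - a by omega, mul_comm _ (iterCoeff γ r a)]

theorem pow_apply_eq_sum_iterCoeff [CharZero K] (r : ℕ) :
    (D.toLinearMap ^ r) P =
      ∑ a ∈ range (r + 1), iterCoeff γ r a • (x ^ (r - 2 * a) * y ^ a * P) := by
  induction r with
  | zero => simp [iterCoeff_zero_zero]
  | succ r ih =>
    rw [pow_succ', Module.End.mul_apply, ih, map_sum]
    simp only [map_smul, coeFn_coe, D.iterCoeff_smul_map_pow_mul_pow_mul hx hy hP,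
      sum_sub_distrib]
    rw [sum_range_succ' _ (r + 1)]
    simp only [iterCoeff_succ_succ, iterCoeff_succ_zero, sub_smul, sum_sub_distrib]
    have hlast : (iterCoeff γ r (r + 1) * (γ + (r - (r + 1) : ℕ))) •
        (x ^ (r + 1 - 2 * (r + 1)) * y ^ (r + 1) * P) = 0 := by
      simp [iterCoeff_of_lt γ (show r < 2 * (r + 1) by omega)]
    rw [← add_zero (∑ a ∈ range (r + 1), _), ← hlast, ← sum_range_succ, sum_range_succ',
      Nat.sub_zero]
    abel

end Derivation

open MvPolynomial

section Generators

variable {f : Derivation ℂ (MvPolynomial (Fin 4) ℂ) (MvPolynomial (Fin 4) ℂ)}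
  (hf1 : f (X 0) = X 0 ^ 2 - 2 * X 1)

include hf1

theorem map_four_mul_X_one_sub_X_zero_sq (hf2 : f (X 1) = X 0 * X 1) :
    f (4 * X 1 - X 0 ^ 2) = ((2 : ℂ) • X 0) * (4 * X 1 - X 0 ^ 2) := by
  have h4 : f 4 = 0 := by exact_mod_cast f.map_natCast 4
  rw [map_sub, Derivation.leibniz, Derivation.leibniz_pow, hf1, hf2]
  simp only [h4, smul_eq_mul, Algebra.smul_def, algebraMap_eq, map_ofNat]
  ring

theorem map_X_two_sub_half_smul_X_zero_mul_X_three
    (hf3 : f (X 2) = (1 / 2 : ℂ) • (X 0 * X 2) - X 1 * X 3)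
    (hf4 : f (X 3) = -((1 / 2 : ℂ) • (X 0 * X 3))) :
    f (X 2 - (1 / 2 : ℂ) • (X 0 * X 3)) =
      ((1 / 2 : ℂ) • X 0) * (X 2 - (1 / 2 : ℂ) • (X 0 * X 3)) := by
  have hhalf : (C (1 / 2) : MvPolynomial (Fin 4) ℂ) * 2 = 1 := by
    rw [← map_ofNat C 2, ← C_mul]
    norm_num
  rw [map_sub, Derivation.map_smul, Derivation.leibniz, hf1, hf3, hf4]
  simp only [smul_eq_mul, Algebra.smul_def, algebraMap_eq]
  linear_combination (X 1 * X 3 + C (1 / 2) * X 0 ^ 2 * X 3) * hhalf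

end Generators

theorem f_iterate_general_formula_general
    (f : Derivation ℂ (MvPolynomial (Fin 4) ℂ) (MvPolynomial (Fin 4) ℂ))
    (hf1 : f (X 0) = X 0 ^ 2 - 2 * X 1) (hf2 : f (X 1) = X 0 * X 1)
    (hf3 : f (X 2) = (1 / 2 : ℂ) • (X 0 * X 2) - X 1 * X 3)
    (hf4 : f (X 3) = -((1 / 2 : ℂ) • (X 0 * X 3)))
    (δ v : MvPolynomial (Fin 4) ℂ)
    (hδ : δ = 4 * X 1 - X 0 ^ 2) (hv : v = X 2 - (1 / 2 : ℂ) • (X 0 * X 3))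
    (j m n : ℕ) (γ : ℂ) (hγ : γ = 2 * j + ((n : ℂ) - m) / 2)
    (r : ℕ) :
    (f.toLinearMap ^ r) (δ ^ j * X 3 ^ m * v ^ n) =
      ∑ p ∈ (Finset.range (r + 1) ×ˢ Finset.range (r + 1)).filter
          (fun p => p.1 + 2 * p.2 = r),
        ((-1 : ℂ) ^ p.2 *
            ((∏ i ∈ Finset.range (2 * p.2), ((p.1 : ℂ) + 2 * p.2 - i)) / (p.2.factorial : ℂ)) *
            ∏ i ∈ Finset.range (r - p.2), (γ + i)) •
          (X 0 ^ p.1 * X 1 ^ p.2 * (δ ^ j * X 3 ^ m * v ^ n)) := by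
  have hfA₁ : f (X 3) = ((-(1 / 2) : ℂ) • X 0) * X 3 := by
    rw [hf4, neg_smul, neg_mul, smul_mul_assoc]
  have hfδ : f δ = ((2 : ℂ) • X 0) * δ := hδ ▸ map_four_mul_X_one_sub_X_zero_sq hf1 hf2
  have hfv : f v = ((1 / 2 : ℂ) • X 0) * v :=
    hv ▸ map_X_two_sub_half_smul_X_zero_mul_X_three hf1 hf3 hf4
  have hfP : f (δ ^ j * X 3 ^ m * v ^ n) = (γ • X 0) * (δ ^ j * X 3 ^ m * v ^ n) := by
    rw [f.map_mul_of_map_eq_mul (f.map_mul_of_map_eq_mul (f.map_pow_of_map_eq_mul hfδ j)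
      (f.map_pow_of_map_eq_mul hfA₁ m)) (f.map_pow_of_map_eq_mul hfv n)]
    simp only [← Nat.cast_smul_eq_nsmul ℂ, smul_smul, ← add_smul, hγ]
    congr 2
    ring
  rw [f.pow_apply_eq_sum_iterCoeff hf1 hf2 hfP, sum_filter_add_two_mul_eq,
    ← sum_filter_of_ne (p := fun a => 2 * a ≤ r) fun a _ ha => ?_]
  · exact sum_congr rfl fun a ha => by rw [iterCoeff_eq_prod γ (mem_filter.mp ha).2]
  · by_contra h
    exact ha (by rw [iterCoeff_of_lt γ (by omega), zero_smul])

/-- In `𝒜 = ℂ[E₁,E₂,A₀,A₁]` with the derivation `f` as in the skein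
lasagna module of `B² × S²`, `δ = 4E₂ - E₁²` and `v = A₀ - (1/2)E₁A₁`, fix `j, m, n : ℕ`
and set `γ = 2j + (n-m)/2 ∈ ℂ`. Then for every `r ≥ 1`,
`f^r(δʲ A₁^m vⁿ) = ∑_{k+2a=r} (-1)^a ((k+2a)⋯(k+1)/a!) (γ)(γ+1)⋯(γ+r-a-1) E₁^k E₂^a δʲ A₁^m vⁿ`.
Here `E₁ = X 0`, `E₂ = X 1`, `A₀ = X 2`, `A₁ = X 3`, and the sum is over pairs
`(k,a)` of naturals with `k + 2a = r`. -/
theorem f_iterate_general_formula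
    (f : Derivation ℂ (MvPolynomial (Fin 4) ℂ) (MvPolynomial (Fin 4) ℂ))
    (hf1 : f (X 0) = X 0 ^ 2 - 2 * X 1) (hf2 : f (X 1) = X 0 * X 1)
    (hf3 : f (X 2) = (1 / 2 : ℂ) • (X 0 * X 2) - X 1 * X 3)
    (hf4 : f (X 3) = -((1 / 2 : ℂ) • (X 0 * X 3)))
    (δ v : MvPolynomial (Fin 4) ℂ)
    (hδ : δ = 4 * X 1 - X 0 ^ 2) (hv : v = X 2 - (1 / 2 : ℂ) • (X 0 * X 3))
    (j m n : ℕ) (γ : ℂ) (hγ : γ = 2 * j + ((n : ℂ) - m) / 2)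
    (r : ℕ) (hr : 1 ≤ r) :
    (f.toLinearMap ^ r) (δ ^ j * X 3 ^ m * v ^ n) =
      ∑ p ∈ (Finset.range (r + 1) ×ˢ Finset.range (r + 1)).filter
          (fun p => p.1 + 2 * p.2 = r),
        ((-1 : ℂ) ^ p.2 *
            ((∏ i ∈ Finset.range (2 * p.2), ((p.1 : ℂ) + 2 * p.2 - i)) / (p.2.factorial : ℂ)) *
            ∏ i ∈ Finset.range (r - p.2), (γ + i)) •
          (X 0 ^ p.1 * X 1 ^ p.2 * (δ ^ j * X 3 ^ m * v ^ n)) :=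
  f_iterate_general_formula_general f hf1 hf2 hf3 hf4 δ v hδ hv j m n γ hγ r
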